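/- arXiv:0902.0451 — 7 statements merged into one kernel-verified Lean document; each statement's English description precedes it below -/
import Mathlib

section
/- Let 𝒩 > 0 be real, n ∈ ℕ, and set N := 𝒩 + 1/2 − n. Assume N > 0. Then for every X ∈ ℝ, ℋ_n^𝒩(X) = (N/𝒩)^{n/2} · H_n^N(X·√(N/𝒩)). -/
open Real MeasureTheory Filter

/-- Relativistic Hermite polynomial via its Rodrigues formula. -/
noncomputable def relHermite (n : ℕ) (N : ℝ) (X : ℝ) : ℝ :=
  (-1 : ℝ)^n * (1 + X^2/N)^(N + (n : ℝ)) *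
    iteratedDeriv n (fun t : ℝ => (1 + t^2/N)^(-N)) X

/-- Cariñena polynomial with positive parameter via its Rodrigues formula. -/
noncomputable def carinenaPos (n : ℕ) (𝒩 : ℝ) (X : ℝ) : ℝ :=
  (-1 : ℝ)^n * (1 + X^2/𝒩)^(𝒩 + 1/2) *
    iteratedDeriv n (fun t : ℝ => (1 + t^2/𝒩)^((n : ℝ) - 𝒩 - 1/2)) X

/-- Cariñena polynomial with negative parameter 𝒩 = -ν via its Rodrigues formula. -/
noncomputable def carinenaNeg (n : ℕ) (ν : ℝ) (X : ℝ) : ℝ :=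
  (-1 : ℝ)^n * (1 - X^2/ν)^((1:ℝ)/2 - ν) *
    iteratedDeriv n (fun t : ℝ => (1 - t^2/ν)^((n : ℝ) + ν - 1/2)) X

/-- The constant α_{n,ν} = (2ν)_n / (2^n n! (ν+1/2)_n). -/
noncomputable def alphaConst (n : ℕ) (ν : ℝ) : ℝ :=
  (ascPochhammer ℝ n).eval (2*ν) /
    (2^n * (n.factorial : ℝ) * (ascPochhammer ℝ n).eval (ν + 1/2))

/-- Gegenbauer polynomial via its Rodrigues formula. -/
noncomputable def gegenbauer (n : ℕ) (ν : ℝ) (X : ℝ) : ℝ :=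
  alphaConst n ν * (-1 : ℝ)^n * (1 - X^2)^((1:ℝ)/2 - ν) *
    iteratedDeriv n (fun t : ℝ => (1 - t^2)^((n : ℝ) + ν - 1/2)) X

/-!
Both polynomials come from Rodrigues formulas for the same family of weights
`(1 + t²/a)^p`. With `N = 𝒩 + 1/2 - n` the Cariñena weight `(1 + t²/𝒩)^(n - 𝒩 - 1/2)` is
`(1 + t²/𝒩)^(-N)`, and the substitution `t ↦ c t` with `c = √(N/𝒩)` turns `1 + t²/𝒩` into
`1 + (c t)²/N`. So the Cariñena weight is the relativistic Hermite weight composed with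
`t ↦ c t`; its `n`-th derivative picks up the factor `c^n = (N/𝒩)^(n/2)`, and the prefactors
agree because `𝒩 + 1/2 = N + n`.
-/

lemma one_add_sq_mul_sqrt_div {N 𝒩 : ℝ} (hN : N ≠ 0) (hN𝒩 : 0 ≤ N / 𝒩) (t : ℝ) :
    1 + (√(N / 𝒩) * t) ^ 2 / N = 1 + t ^ 2 / 𝒩 := by
  rw [mul_pow, sq_sqrt hN𝒩]
  field_simp

lemma contDiff_one_add_sq_div_rpow {a : ℝ} (ha : 0 ≤ a) (p : ℝ) {n : ℕ∞} :
    ContDiff ℝ n (fun t : ℝ => (1 + t ^ 2 / a) ^ p) :=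
  (contDiff_const.add ((contDiff_id.pow 2).div_const a)).rpow_const_of_ne
    fun t => by positivity

lemma iteratedDeriv_one_add_sq_div_rpow_eq {N 𝒩 : ℝ} (hN : 0 < N) (hN𝒩 : 0 ≤ N / 𝒩)
    (n : ℕ) (X : ℝ) :
    iteratedDeriv n (fun t : ℝ => (1 + t ^ 2 / 𝒩) ^ (-N)) X
      = √(N / 𝒩) ^ n * iteratedDeriv n (fun s : ℝ => (1 + s ^ 2 / N) ^ (-N)) (√(N / 𝒩) * X) := by
  have hcomp : (fun t : ℝ => (1 + t ^ 2 / 𝒩) ^ (-N))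
      = fun t => (1 + (√(N / 𝒩) * t) ^ 2 / N) ^ (-N) := by
    simp only [one_add_sq_mul_sqrt_div hN.ne' hN𝒩]
  rw [hcomp, iteratedDeriv_comp_const_mul (contDiff_one_add_sq_div_rpow hN.le (-N))]

theorem carinena_pos_eq_relHermite (𝒩 : ℝ) (h𝒩 : 0 < 𝒩) (n : ℕ)
    (N : ℝ) (hN : N = 𝒩 + 1/2 - n) (hNpos : 0 < N) (X : ℝ) :
    carinenaPos n 𝒩 X = (N/𝒩)^((n : ℝ)/2) * relHermite n N (X * Real.sqrt (N/𝒩)) := by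
  have hN𝒩 : 0 ≤ N / 𝒩 := (div_pos hNpos h𝒩).le
  have hweight : (n : ℝ) - 𝒩 - 1 / 2 = -N := by rw [hN]; ring
  have hprefactor : 𝒩 + 1 / 2 = N + n := by rw [hN]; ring
  have hscale : (N / 𝒩) ^ ((n : ℝ) / 2) = √(N / 𝒩) ^ n := by
    rw [rpow_div_two_eq_sqrt _ hN𝒩, rpow_natCast]
  unfold carinenaPos relHermite
  rw [hweight, hprefactor, iteratedDeriv_one_add_sq_div_rpow_eq hNpos hN𝒩, hscale,
    mul_comm X, one_add_sq_mul_sqrt_div hNpos.ne' hN𝒩]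
  ring
end

section
/- (Nagel's identity) Let N > 0 be real and n ∈ ℕ. Then for every X ∈ ℝ, H_n^N(X) = (n!/N^{n/2}) · (1 + X²/N)^{n/2} · C_n^N( (X/√N) / √(1 + X²/N) ). (Note that (X/√N)/√(1+X²/N) ∈ (−1, 1), so the right-hand side is well defined.) -/
open Real MeasureTheory Filter

/-!
Write `s = √(N + X²)` and `y = X / s`, so that `1 - y² = N / s²` and `1 + X²/N = s² / N`.
With `G_m(t) = (1 - t²)^(m + N - 1/2)`, induction on `n` gives
`Dⁿ (1 + X²/N)^(-N) = n! α_{n,N} √N · (Dⁿ G_n)(y) / s^(n+1)`. Differentiating the right side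
in `X` yields `((1 - y²) (Dⁿ⁺¹ G_n)(y) - (n+1) y (Dⁿ G_n)(y)) / s^(n+2)`; computing `Dⁿ⁺¹ G_{n+1}`
once from `G_{n+1} = (1 - t²) G_n` and once from `G_{n+1}' = -(2n+2N+1) t G_n` (Leibniz rule both
times) shows that the bracket equals `(n+2N)/(2n+2N+1) · (Dⁿ⁺¹ G_{n+1})(y)`, and this factor
is exactly `(n+1) α_{n+1,N} / α_{n,N}`. Substituting into the two Rodrigues formulas gives the
identity.
-/

open Set
open scoped ContDiff

section Leibniz

variable {𝕜 : Type*} [NontriviallyNormedField 𝕜] {f : 𝕜 → 𝕜} {x : 𝕜}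

lemma ContDiffAt.hasDerivAt_iteratedDeriv (hf : ContDiffAt 𝕜 ∞ f x) (n : ℕ) :
    HasDerivAt (iteratedDeriv n f) (iteratedDeriv (n + 1) f x) x := by
  have hsmooth : ∀ n, ContDiffAt 𝕜 ∞ (iteratedDeriv n f) x := by
    intro n
    induction n with
    | zero => simpa using hf
    | succ n ih => rw [iteratedDeriv_succ]; exact ih.derivWithin le_rfl
  rw [iteratedDeriv_succ]
  exact ((hsmooth n).differentiableAt (by simp)).hasDerivAt

lemma iteratedDeriv_id_mul {k : ℕ} (hf : ContDiffAt 𝕜 k f x) :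
    iteratedDeriv k (fun t => t * f t) x
      = k * iteratedDeriv (k - 1) f x + x * iteratedDeriv k f x := by
  rw [iteratedDeriv_fun_mul (f := fun t => t) contDiffAt_id hf]
  rcases k with _ | k
  · simp
  · simp [Finset.sum_range_succ', iteratedDeriv_fun_id]

lemma iteratedDeriv_one_sub_sq_mul {k : ℕ} (hf : ContDiffAt 𝕜 k f x) :
    iteratedDeriv k (fun t => (1 - t ^ 2) * f t) x = (1 - x ^ 2) * iteratedDeriv k f x
      - 2 * k * x * iteratedDeriv (k - 1) f x - k * (k - 1) * iteratedDeriv (k - 2) f x := by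
  have hsplit : (fun t => (1 - t ^ 2) * f t) = fun t => f t - t * (t * f t) := by
    funext t; ring
  have htf : ContDiffAt 𝕜 k (fun t => t * f t) x := contDiffAt_id.mul hf
  rw [hsplit, iteratedDeriv_fun_sub (g := fun t => t * (t * f t)) hf (contDiffAt_id.mul htf),
    iteratedDeriv_id_mul htf, iteratedDeriv_id_mul hf, iteratedDeriv_id_mul (hf.of_le (by simp))]
  rcases k with _ | k
  · simp only [iteratedDeriv_zero]
    ring
  · simp only [Nat.add_sub_cancel]
    push_cast
    ring

end Leibniz

noncomputable def gegenbauerRodriguesFun (ν : ℝ) (m : ℕ) (t : ℝ) : ℝ :=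
  (1 - t ^ 2) ^ ((m : ℝ) + ν - 1 / 2)

namespace gegenbauerRodriguesFun

variable (ν : ℝ) (m : ℕ) {t : ℝ}

lemma one_sub_sq_pos (ht : t ∈ Ioo (-1 : ℝ) 1) : 0 < 1 - t ^ 2 := by
  obtain ⟨h₁, h₂⟩ := ht
  nlinarith

lemma contDiffAt (ht : t ∈ Ioo (-1 : ℝ) 1) : ContDiffAt ℝ ∞ (gegenbauerRodriguesFun ν m) t :=
  ((contDiffAt_const.sub (contDiffAt_id.pow 2)).rpow_const_of_ne (one_sub_sq_pos ht).ne')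

lemma succ_eq (ht : t ∈ Ioo (-1 : ℝ) 1) :
    gegenbauerRodriguesFun ν (m + 1) t = (1 - t ^ 2) * gegenbauerRodriguesFun ν m t := by
  rw [gegenbauerRodriguesFun, gegenbauerRodriguesFun, Nat.cast_succ,
    show (m : ℝ) + 1 + ν - 1 / 2 = (m + ν - 1 / 2) + 1 by ring,
    rpow_add_one (one_sub_sq_pos ht).ne', mul_comm]

lemma hasDerivAt_succ (ht : t ∈ Ioo (-1 : ℝ) 1) :
    HasDerivAt (gegenbauerRodriguesFun ν (m + 1))
      (-(2 * m + 2 * ν + 1) * (t * gegenbauerRodriguesFun ν m t)) t := by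
  have hbase : HasDerivAt (fun s : ℝ => 1 - s ^ 2) (-(2 * t)) t := by
    simpa using (hasDerivAt_pow 2 t).const_sub 1
  convert hbase.rpow_const (p := ((m + 1 : ℕ) : ℝ) + ν - 1 / 2) (Or.inl (one_sub_sq_pos ht).ne')
    using 1
  · rfl
  rw [gegenbauerRodriguesFun, Nat.cast_succ,
    show (m : ℝ) + 1 + ν - 1 / 2 - 1 = m + ν - 1 / 2 by ring]
  ring

lemma iteratedDeriv_succ_raise (ht : t ∈ Ioo (-1 : ℝ) 1) :
    (2 * m + 2 * ν + 1) * ((1 - t ^ 2) * iteratedDeriv (m + 1) (gegenbauerRodriguesFun ν m) t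
        - (m + 1) * t * iteratedDeriv m (gegenbauerRodriguesFun ν m) t)
      = (m + 2 * ν) * iteratedDeriv (m + 1) (gegenbauerRodriguesFun ν (m + 1)) t := by
  have hG := contDiffAt ν m ht
  have hnhds : ∀ᶠ s in nhds t, s ∈ Ioo (-1 : ℝ) 1 := isOpen_Ioo.mem_nhds ht
  have hprod : iteratedDeriv (m + 1) (gegenbauerRodriguesFun ν (m + 1)) t
      = (1 - t ^ 2) * iteratedDeriv (m + 1) (gegenbauerRodriguesFun ν m) t
        - 2 * (m + 1) * t * iteratedDeriv m (gegenbauerRodriguesFun ν m) t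
        - (m + 1) * m * iteratedDeriv (m - 1) (gegenbauerRodriguesFun ν m) t := by
    have hEq : gegenbauerRodriguesFun ν (m + 1) =ᶠ[nhds t]
        fun s => (1 - s ^ 2) * gegenbauerRodriguesFun ν m s :=
      hnhds.mono fun s hs => succ_eq ν m hs
    rw [hEq.iteratedDeriv_eq, iteratedDeriv_one_sub_sq_mul (hG.of_le (mod_cast le_top))]
    simp only [Nat.add_sub_cancel, Nat.cast_succ, add_sub_cancel_right]
    rfl
  have hderiv : iteratedDeriv (m + 1) (gegenbauerRodriguesFun ν (m + 1)) t
      = -(2 * m + 2 * ν + 1) * (m * iteratedDeriv (m - 1) (gegenbauerRodriguesFun ν m) t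
        + t * iteratedDeriv m (gegenbauerRodriguesFun ν m) t) := by
    have hEq : deriv (gegenbauerRodriguesFun ν (m + 1)) =ᶠ[nhds t]
        fun s => -(2 * m + 2 * ν + 1) * (s * gegenbauerRodriguesFun ν m s) :=
      hnhds.mono fun s hs => (hasDerivAt_succ ν m hs).deriv
    rw [iteratedDeriv_succ', hEq.iteratedDeriv_eq,
      iteratedDeriv_const_mul_field, iteratedDeriv_id_mul (hG.of_le (mod_cast le_top))]
  linear_combination (-(2 * m + 2 * ν + 1)) * hprod + (m + 1) * hderiv

end gegenbauerRodriguesFun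

lemma factorial_mul_alphaConst_succ {ν : ℝ} (hν : -(1 / 2) < ν) (n : ℕ) :
    ((n + 1).factorial : ℝ) * alphaConst (n + 1) ν * (2 * n + 2 * ν + 1)
      = n.factorial * alphaConst n ν * (n + 2 * ν) := by
  have hpoch : 0 < (ascPochhammer ℝ n).eval (ν + 1 / 2) := ascPochhammer_pos n _ (by linarith)
  have hlast : 0 < ν + 1 / 2 + n := by linarith [n.cast_nonneg (α := ℝ)]
  rw [alphaConst, alphaConst, ascPochhammer_succ_eval, ascPochhammer_succ_eval, Nat.factorial_succ]
  push_cast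
  rw [show (2 * n + 2 * ν + 1 : ℝ) = 2 * (ν + 1 / 2 + n) by ring]
  generalize (ascPochhammer ℝ n).eval (ν + 1 / 2) = p at hpoch ⊢
  generalize ν + 1 / 2 + n = c at hlast ⊢
  field_simp
  ring

lemma hasDerivAt_comp_div_sqrt_div_pow {N X g' : ℝ} {g : ℝ → ℝ} (hN : 0 < N) (a : ℕ)
    (hg : HasDerivAt g g' (X / √(N + X ^ 2))) :
    HasDerivAt (fun x => g (x / √(N + x ^ 2)) / √(N + x ^ 2) ^ a)
      (((1 - (X / √(N + X ^ 2)) ^ 2) * g' - a * (X / √(N + X ^ 2)) * g (X / √(N + X ^ 2)))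
        / √(N + X ^ 2) ^ (a + 1)) X := by
  have hpos : 0 < N + X ^ 2 := by positivity
  have hsq : √(N + X ^ 2) ^ 2 = N + X ^ 2 := sq_sqrt hpos.le
  have hs0 : 0 < √(N + X ^ 2) := sqrt_pos.mpr hpos
  have hs : HasDerivAt (fun x => √(N + x ^ 2)) (X / √(N + X ^ 2)) X := by
    convert ((hasDerivAt_pow 2 X).const_add N).sqrt hpos.ne' using 1
    field_simp
    ring
  have hy : HasDerivAt (fun x => x / √(N + x ^ 2)) (N / √(N + X ^ 2) ^ 3) X := by
    refine ((hasDerivAt_id' X).div hs hs0.ne').congr_deriv ?_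
    field_simp
    linear_combination hsq
  refine ((hg.comp X hy).div (hs.pow a) (pow_ne_zero a hs0.ne')).congr_deriv ?_
  simp only [Pi.pow_apply, Function.comp_apply]
  generalize √(N + X ^ 2) = s at hs0 hsq ⊢
  obtain rfl : N = s ^ 2 - X ^ 2 := by linarith
  rcases a with _ | a
  · field_simp
    ring
  · rw [Nat.add_sub_cancel]
    field_simp
    ring

section ChangeOfVariables

variable {N : ℝ} (hN : 0 < N) (X : ℝ)
include hN

lemma one_sub_sq_div_sqrt_add_sq : 1 - (X / √(N + X ^ 2)) ^ 2 = N / (N + X ^ 2) := by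
  have hpos : 0 < N + X ^ 2 := by positivity
  rw [div_pow, sq_sqrt hpos.le]
  field_simp
  ring

lemma div_sqrt_add_sq_mem_Ioo : X / √(N + X ^ 2) ∈ Ioo (-1 : ℝ) 1 := by
  have hsq : (X / √(N + X ^ 2)) ^ 2 < 1 := by
    have := one_sub_sq_div_sqrt_add_sq hN X
    have : 0 < N / (N + X ^ 2) := by positivity
    linarith
  exact abs_lt.mp (sq_lt_one_iff_abs_lt_one _ |>.mp hsq)

end ChangeOfVariables

lemma iteratedDeriv_one_add_sq_div_rpow_neg {N : ℝ} (hN : 0 < N) (n : ℕ) (X : ℝ) :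
    iteratedDeriv n (fun t : ℝ => (1 + t ^ 2 / N) ^ (-N)) X
      = n.factorial * alphaConst n N * √N * (iteratedDeriv n (gegenbauerRodriguesFun N n)
          (X / √(N + X ^ 2)) / √(N + X ^ 2) ^ (n + 1)) := by
  induction n generalizing X with
  | zero =>
    have hw : 0 < N / (N + X ^ 2) := by positivity
    have hu : 1 + X ^ 2 / N = (N / (N + X ^ 2))⁻¹ := by field_simp
    have hsqrt : √N / √(N + X ^ 2) = (N / (N + X ^ 2)) ^ (1 / 2 : ℝ) := by
      rw [← sqrt_div' _ (by positivity : 0 ≤ N + X ^ 2), sqrt_eq_rpow]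
    simp only [iteratedDeriv_zero, gegenbauerRodriguesFun, one_sub_sq_div_sqrt_add_sq hN X]
    rw [hu, inv_rpow hw.le, ← rpow_neg hw.le, neg_neg]
    simp only [alphaConst, Nat.factorial_zero, ascPochhammer_zero, Polynomial.eval_one, pow_zero,
      zero_add, pow_one, Nat.cast_zero, Nat.cast_one, mul_one, div_one, one_mul]
    rw [mul_div_left_comm, mul_comm, hsqrt, ← rpow_add hw]
    norm_num
  | succ n ih =>
    set y := X / √(N + X ^ 2)
    have hy := div_sqrt_add_sq_mem_Ioo hN X
    have hderiv := (hasDerivAt_comp_div_sqrt_div_pow hN (n + 1)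
      ((gegenbauerRodriguesFun.contDiffAt N n hy).hasDerivAt_iteratedDeriv n)).const_mul
      (n.factorial * alphaConst n N * √N)
    rw [iteratedDeriv_succ, funext ih, hderiv.deriv]
    have hraise := gegenbauerRodriguesFun.iteratedDeriv_succ_raise N n hy
    have halpha := factorial_mul_alphaConst_succ (by linarith : -(1 / 2) < N) n
    have hk : (2 * n + 2 * N + 1 : ℝ) ≠ 0 := by positivity
    apply mul_right_cancel₀ hk
    push_cast
    linear_combination (√N * n.factorial * alphaConst n N / √(N + X ^ 2) ^ (n + 2)) * hraise
      - (√N * iteratedDeriv (n + 1) (gegenbauerRodriguesFun N (n + 1)) y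
          / √(N + X ^ 2) ^ (n + 2)) * halpha

theorem nagel_identity (N : ℝ) (hN : 0 < N) (n : ℕ) (X : ℝ) :
    relHermite n N X = ((n.factorial : ℝ) / N^((n : ℝ)/2)) * (1 + X^2/N)^((n : ℝ)/2) *
      gegenbauer n N ((X / Real.sqrt N) / Real.sqrt (1 + X^2/N)) := by
  have hu : 0 < 1 + X ^ 2 / N := by positivity
  have hs : √(N + X ^ 2) = √N * √(1 + X ^ 2 / N) := by
    rw [← sqrt_mul hN.le]
    field_simp
  have hw : N / (N + X ^ 2) = (1 + X ^ 2 / N)⁻¹ := by field_simp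
  have hG : (fun t : ℝ => (1 - t ^ 2) ^ ((n : ℝ) + N - 1 / 2)) = gegenbauerRodriguesFun N n := rfl
  have hpow : (1 + X ^ 2 / N) ^ (N + n)
      = (1 + X ^ 2 / N) ^ (-(1 / 2 - N)) * √(1 + X ^ 2 / N) ^ (2 * n + 1) := by
    rw [← rpow_natCast (√_), ← rpow_div_two_eq_sqrt _ hu.le, ← rpow_add hu]
    push_cast
    ring_nf
  rw [relHermite, gegenbauer, div_div, ← hs, hG, iteratedDeriv_one_add_sq_div_rpow_neg hN,
    one_sub_sq_div_sqrt_add_sq hN, hw, inv_rpow hu.le, ← rpow_neg hu.le, hpow, hs,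
    rpow_div_two_eq_sqrt _ hN.le, rpow_div_two_eq_sqrt _ hu.le, rpow_natCast, rpow_natCast]
  have : 0 < √N := sqrt_pos.mpr hN
  have : 0 < √(1 + X ^ 2 / N) := sqrt_pos.mpr hu
  field_simp
  ring
end

section
/- Let N > 0 be real and n ∈ ℕ. Then for every y ∈ (−1, 1), setting x := √N · y/√(1 − y²), one has √N · (1 − y²)^{−3/2} · (1 + x²/N)^{−(N+1+n)} · (H_n^N(x))² = (n!)² · N^{1/2−n} · (1 − y²)^{N−1/2} · (C_n^N(y))². (Here √N·(1−y²)^{−3/2} is the Jacobian dx/dy of the inverse change of variables.) -/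
open Real MeasureTheory Filter

/-!
Under `x = √N y / √(1 - y²)` one has `1 + x²/N = (1 - y²)⁻¹` and `dx/dy = √N / √(1 - y²)³`.
Writing `g_a(t) = (1 - t²)^a`, the derivatives of these weights satisfy
`(2a + 1 - n) g_{a+1}^{(n+1)} = (2a + 2) ((1 - t²) g_a^{(n+1)} - (n + 1) t g_a^{(n)})`,
and together with the chain rule this gives, by induction on `n`,
`D^n (1 + x²/N)^(-N) = n! α_{n,N} / √N^n · √(1 - y²)^(n+1) · g_{n+N-1/2}^{(n)}(y)`.
Comparing the two Rodrigues formulas yields `H_n^N(x) = n! / (√N √(1 - y²))^n · C_n^N(y)`, and the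
density identity is its square.
-/

open scoped ContDiff

section IteratedDeriv

variable {𝕜 : Type*} [NontriviallyNormedField 𝕜]

theorem ContDiffAt.hasDerivAt_iteratedDeriv_s5 {F : Type*} [NormedAddCommGroup F] [NormedSpace 𝕜 F]
    {f : 𝕜 → F} {x : 𝕜} {n : WithTop ℕ∞} {m : ℕ}
    (h : ContDiffAt 𝕜 n f x) (hmn : (m : WithTop ℕ∞) < n) :
    HasDerivAt (iteratedDeriv m f) (iteratedDeriv (m + 1) f x) x := by
  have hd : DifferentiableAt 𝕜 (iteratedDeriv m f) x := by
    rw [iteratedDeriv_eq_equiv_comp]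
    exact (LinearIsometryEquiv.differentiable _ _).comp x (h.differentiableAt_iteratedFDeriv hmn)
  rw [iteratedDeriv_succ]
  exact hd.hasDerivAt

theorem iteratedDeriv_fun_id_mul {u : 𝕜 → 𝕜} {x : 𝕜} {n : ℕ} (hu : ContDiffAt 𝕜 n u x) :
    iteratedDeriv n (fun t => t * u t) x
      = x * iteratedDeriv n u x + n * iteratedDeriv (n - 1) u x := by
  rw [show (fun t => t * u t) = (fun t => id t * u t) from rfl,
    iteratedDeriv_fun_mul contDiffAt_id hu]
  cases n with
  | zero => simp
  | succ n =>
    rw [Finset.sum_range_succ', Finset.sum_range_succ',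
      Finset.sum_eq_zero fun i _ => by simp [iteratedDeriv_id]]
    simp [iteratedDeriv_id, add_comm, mul_comm]

end IteratedDeriv

theorem alphaConst_zero (ν : ℝ) : alphaConst 0 ν = 1 := by
  simp [alphaConst]

theorem alphaConst_succ (n : ℕ) (ν : ℝ) :
    alphaConst (n + 1) ν = alphaConst n ν * (2 * ν + n) / ((n + 1) * (2 * ν + 2 * n + 1)) := by
  simp only [alphaConst, ascPochhammer_succ_eval, pow_succ, Nat.factorial_succ]
  push_cast
  conv_rhs => rw [div_mul_eq_mul_div, div_div]
  congr 1
  ring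

theorem one_sub_sq_pos_of_mem_Ioo {y : ℝ} (hy : y ∈ Set.Ioo (-1 : ℝ) 1) : 0 < 1 - y ^ 2 := by
  nlinarith [hy.1, hy.2]

noncomputable def gegenbauerWeight (a : ℝ) : ℝ → ℝ := fun t => (1 - t ^ 2) ^ a

section GegenbauerWeight

variable {a y : ℝ}

theorem contDiffAt_gegenbauerWeight {n : WithTop ℕ∞} (hy : 1 - y ^ 2 ≠ 0) :
    ContDiffAt ℝ n (gegenbauerWeight a) y :=
  (contDiffAt_const.sub (contDiffAt_id.pow 2)).rpow_const_of_ne hy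

theorem hasDerivAt_gegenbauerWeight_add_one (hy : 1 - y ^ 2 ≠ 0) :
    HasDerivAt (gegenbauerWeight (a + 1)) (-2 * (a + 1) * (y * gegenbauerWeight a y)) y := by
  have h := ((hasDerivAt_pow 2 y).const_sub 1).rpow_const (p := a + 1) (Or.inl hy)
  refine h.congr_deriv ?_
  norm_num [gegenbauerWeight]
  ring

theorem iteratedDeriv_gegenbauerWeight_add_one (n : ℕ) (hy : 1 - y ^ 2 ≠ 0) :
    (2 * a + 1 - n) * iteratedDeriv (n + 1) (gegenbauerWeight (a + 1)) y
      = (2 * a + 2) * ((1 - y ^ 2) * iteratedDeriv (n + 1) (gegenbauerWeight a) y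
          - (n + 1) * y * iteratedDeriv n (gegenbauerWeight a) y) := by
  have hnhds : ∀ᶠ t in nhds y, 1 - t ^ 2 ≠ 0 :=
    (continuous_const.sub (continuous_pow 2)).continuousAt.eventually_ne hy
  have hderiv : deriv (gegenbauerWeight (a + 1)) =ᶠ[nhds y]
      fun t => -2 * (a + 1) * (t * gegenbauerWeight a t) :=
    hnhds.mono fun t ht => (hasDerivAt_gegenbauerWeight_add_one ht).deriv
  have hmul : gegenbauerWeight (a + 1) =ᶠ[nhds y]
      fun t => gegenbauerWeight a t - t * (t * gegenbauerWeight a t) :=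
    hnhds.mono fun t ht => by
      simp only [gegenbauerWeight, rpow_add_one ht]
      ring
  -- Expand `g_{a+1}^{(n+1)}` once through `g_{a+1}' = -2(a+1) t g_a` and once through
  -- `g_{a+1} = (1 - t²) g_a`; eliminating `g_a^{(n-1)}` between the two gives the claim.
  have hviaDeriv : iteratedDeriv (n + 1) (gegenbauerWeight (a + 1)) y
      = -2 * (a + 1) * (y * iteratedDeriv n (gegenbauerWeight a) y
          + n * iteratedDeriv (n - 1) (gegenbauerWeight a) y) := by
    rw [iteratedDeriv_succ', hderiv.iteratedDeriv_eq, iteratedDeriv_const_mul_field,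
      iteratedDeriv_fun_id_mul (contDiffAt_gegenbauerWeight hy)]
  have hviaMul : iteratedDeriv (n + 1) (gegenbauerWeight (a + 1)) y
      = iteratedDeriv (n + 1) (gegenbauerWeight a) y
        - (y * (y * iteratedDeriv (n + 1) (gegenbauerWeight a) y
            + (n + 1) * iteratedDeriv n (gegenbauerWeight a) y)
          + (n + 1) * (y * iteratedDeriv n (gegenbauerWeight a) y
            + n * iteratedDeriv (n - 1) (gegenbauerWeight a) y)) := by
    have h1 : ContDiffAt ℝ (n + 1 : ℕ) (fun t => t * gegenbauerWeight a t) y :=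
      contDiffAt_id.mul (contDiffAt_gegenbauerWeight hy)
    have h2 : ContDiffAt ℝ (n + 1 : ℕ) (fun t => t * (t * gegenbauerWeight a t)) y :=
      contDiffAt_id.mul h1
    rw [hmul.iteratedDeriv_eq, iteratedDeriv_fun_sub (contDiffAt_gegenbauerWeight hy) h2,
      iteratedDeriv_fun_id_mul h1, iteratedDeriv_fun_id_mul (contDiffAt_gegenbauerWeight hy),
      iteratedDeriv_fun_id_mul (contDiffAt_gegenbauerWeight hy), Nat.add_sub_cancel]
    push_cast
    ring
  linear_combination (2 * a + 2) * hviaMul - ((n : ℝ) + 1) * hviaDeriv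

end GegenbauerWeight

noncomputable def relHermiteWeight (N : ℝ) : ℝ → ℝ := fun t => (1 + t ^ 2 / N) ^ (-N)

noncomputable def relCoord (N y : ℝ) : ℝ := √N * y / √(1 - y ^ 2)

section RelCoord

variable {N y : ℝ}

theorem contDiff_relHermiteWeight {n : WithTop ℕ∞} (hN : 0 < N) :
    ContDiff ℝ n (relHermiteWeight N) :=
  (contDiff_const.add ((contDiff_id.pow 2).div_const N)).rpow_const_of_ne
    fun t => (by positivity : 0 < 1 + t ^ 2 / N).ne'

theorem hasDerivAt_sqrt_one_sub_sq (hy : 1 - y ^ 2 ≠ 0) :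
    HasDerivAt (fun t => √(1 - t ^ 2)) (-y / √(1 - y ^ 2)) y := by
  refine (((hasDerivAt_pow 2 y).const_sub 1).sqrt hy).congr_deriv ?_
  norm_num
  ring

theorem hasDerivAt_relCoord (hy : y ∈ Set.Ioo (-1 : ℝ) 1) :
    HasDerivAt (relCoord N) (√N / √(1 - y ^ 2) ^ 3) y := by
  have hP := one_sub_sq_pos_of_mem_Ioo hy
  have hw : 0 < √(1 - y ^ 2) := sqrt_pos.mpr hP
  have hw2 : √(1 - y ^ 2) ^ 2 = 1 - y ^ 2 := sq_sqrt hP.le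
  refine (((hasDerivAt_id y).const_mul √N).div (hasDerivAt_sqrt_one_sub_sq hP.ne')
    hw.ne').congr_deriv ?_
  simp only [id_eq]
  field_simp
  linear_combination √N * hw2

theorem one_add_relCoord_sq_div (hN : 0 < N) (hy : y ∈ Set.Ioo (-1 : ℝ) 1) :
    1 + relCoord N y ^ 2 / N = (1 - y ^ 2)⁻¹ := by
  have hP := one_sub_sq_pos_of_mem_Ioo hy
  rw [relCoord, div_pow, mul_pow, sq_sqrt hN.le, sq_sqrt hP.le]
  field_simp
  ring

theorem iteratedDeriv_succ_relHermiteWeight_relCoord (hN : 0 < N)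
    (hy : y ∈ Set.Ioo (-1 : ℝ) 1) {n : ℕ} {a c : ℝ} (h : ∀ z ∈ Set.Ioo (-1 : ℝ) 1,
      iteratedDeriv n (relHermiteWeight N) (relCoord N z)
        = c * √(1 - z ^ 2) ^ (n + 1) * iteratedDeriv n (gegenbauerWeight a) z) :
    iteratedDeriv (n + 1) (relHermiteWeight N) (relCoord N y)
      = c / √N * √(1 - y ^ 2) ^ (n + 2)
        * ((1 - y ^ 2) * iteratedDeriv (n + 1) (gegenbauerWeight a) y
          - (n + 1) * y * iteratedDeriv n (gegenbauerWeight a) y) := by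
  have hP := one_sub_sq_pos_of_mem_Ioo hy
  have hw : 0 < √(1 - y ^ 2) := sqrt_pos.mpr hP
  have hsN : 0 < √N := sqrt_pos.mpr hN
  have hL : HasDerivAt (fun z => iteratedDeriv n (relHermiteWeight N) (relCoord N z))
      (iteratedDeriv (n + 1) (relHermiteWeight N) (relCoord N y) * (√N / √(1 - y ^ 2) ^ 3)) y :=
    ((contDiff_relHermiteWeight (n := ω) hN).contDiffAt.hasDerivAt_iteratedDeriv_s5 (m := n)
      (WithTop.coe_lt_top _)).comp y (hasDerivAt_relCoord hy)
  have hR : HasDerivAt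
      (fun z => c * √(1 - z ^ 2) ^ (n + 1) * iteratedDeriv n (gegenbauerWeight a) z)
      (c * ((n + 1 : ℕ) * √(1 - y ^ 2) ^ n * (-y / √(1 - y ^ 2)))
          * iteratedDeriv n (gegenbauerWeight a) y
        + c * √(1 - y ^ 2) ^ (n + 1) * iteratedDeriv (n + 1) (gegenbauerWeight a) y) y :=
    (((hasDerivAt_sqrt_one_sub_sq hP.ne').pow (n + 1)).const_mul c).mul
      ((contDiffAt_gegenbauerWeight (n := ω) hP.ne').hasDerivAt_iteratedDeriv_s5 (m := n)
        (WithTop.coe_lt_top _))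
  have hder := hL.unique (hR.congr_of_eventuallyEq
    (Filter.eventually_of_mem (isOpen_Ioo.mem_nhds hy) h))
  -- the `set` keeps the radicand inside `√(1 - y ^ 2)` out of reach of the rewrite
  set w := √(1 - y ^ 2)
  rw [← sq_sqrt hP.le]
  field_simp at hder ⊢
  push_cast at hder
  linear_combination hder

end RelCoord

theorem iteratedDeriv_relHermiteWeight_relCoord {N : ℝ} (hN : 0 < N) (n : ℕ) :
    ∀ y ∈ Set.Ioo (-1 : ℝ) 1, iteratedDeriv n (relHermiteWeight N) (relCoord N y)
      = n.factorial * alphaConst n N / √N ^ n * √(1 - y ^ 2) ^ (n + 1)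
        * iteratedDeriv n (gegenbauerWeight (n + N - 1 / 2)) y := by
  induction n with
  | zero =>
    intro y hy
    have hP := one_sub_sq_pos_of_mem_Ioo hy
    simp only [iteratedDeriv_zero, relHermiteWeight, gegenbauerWeight,
      one_add_relCoord_sq_div hN hy, alphaConst_zero, Nat.factorial_zero, Nat.cast_zero,
      Nat.cast_one, pow_zero, div_one, one_mul, zero_add, pow_one]
    rw [inv_rpow hP.le, rpow_neg hP.le, inv_inv, sqrt_eq_rpow, ← rpow_add hP]
    ring_nf
  | succ n ih =>
    intro y hy
    have hP := one_sub_sq_pos_of_mem_Ioo hy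
    have hsN : 0 < √N := sqrt_pos.mpr hN
    have hrec := iteratedDeriv_gegenbauerWeight_add_one (a := n + N - 1 / 2) n hP.ne'
    have hG : iteratedDeriv (n + 1) (gegenbauerWeight (n + N - 1 / 2 + 1)) y
        = (2 * n + 2 * N + 1) / (n + 2 * N)
          * ((1 - y ^ 2) * iteratedDeriv (n + 1) (gegenbauerWeight (n + N - 1 / 2)) y
            - (n + 1) * y * iteratedDeriv n (gegenbauerWeight (n + N - 1 / 2)) y) := by
      rw [div_mul_eq_mul_div, eq_div_iff (by positivity)]
      linear_combination hrec
    rw [iteratedDeriv_succ_relHermiteWeight_relCoord hN hy ih,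
      show ((n + 1 : ℕ) : ℝ) + N - 1 / 2 = n + N - 1 / 2 + 1 by push_cast; ring, hG,
      Nat.factorial_succ, alphaConst_succ]
    field_simp
    push_cast
    ring

theorem relHermite_relCoord {N y : ℝ} (hN : 0 < N) (n : ℕ) (hy : y ∈ Set.Ioo (-1 : ℝ) 1) :
    relHermite n N (relCoord N y)
      = n.factorial / (√N * √(1 - y ^ 2)) ^ n * gegenbauer n N y := by
  have hP := one_sub_sq_pos_of_mem_Ioo hy
  rw [relHermite, gegenbauer,
    show (fun t : ℝ => (1 + t ^ 2 / N) ^ (-N)) = relHermiteWeight N from rfl,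
    show (fun t : ℝ => (1 - t ^ 2) ^ ((n : ℝ) + N - 1 / 2))
      = gegenbauerWeight (n + N - 1 / 2) from rfl,
    iteratedDeriv_relHermiteWeight_relCoord hN n y hy, one_add_relCoord_sq_div hN hy,
    inv_rpow hP.le, rpow_add hP, rpow_natCast, rpow_sub hP, ← sqrt_eq_rpow]
  have hw : 0 < √(1 - y ^ 2) := sqrt_pos.mpr hP
  have hsN : 0 < √N := sqrt_pos.mpr hN
  have hPn : (1 - y ^ 2) ^ n = √(1 - y ^ 2) ^ (2 * n) := by rw [pow_mul, sq_sqrt hP.le]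
  field_simp
  rw [hPn]
  ring

theorem relHermite_density_change_of_variables (N : ℝ) (hN : 0 < N) (n : ℕ)
    (y : ℝ) (hy : y ∈ Set.Ioo (-1 : ℝ) 1)
    (x : ℝ) (hx : x = Real.sqrt N * y / Real.sqrt (1 - y^2)) :
    Real.sqrt N * (1 - y^2)^(-(3:ℝ)/2) * (1 + x^2/N)^(-(N + 1 + n)) * (relHermite n N x)^2
      = ((n.factorial : ℝ))^2 * N^((1:ℝ)/2 - n) * (1 - y^2)^(N - 1/2) *
          (gegenbauer n N y)^2 := by
  have hP := one_sub_sq_pos_of_mem_Ioo hy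
  have hjacobian : (1 - y ^ 2) ^ (-(3 : ℝ) / 2) = ((1 - y ^ 2) * √(1 - y ^ 2))⁻¹ := by
    rw [show -(3 : ℝ) / 2 = -(1 + 1 / 2) by norm_num, rpow_neg hP.le, rpow_add hP, rpow_one,
      ← sqrt_eq_rpow]
  have hweight :
      ((1 - y ^ 2)⁻¹) ^ (-(N + 1 + n)) = (1 - y ^ 2) ^ N * (1 - y ^ 2) * (1 - y ^ 2) ^ n := by
    rw [inv_rpow hP.le, rpow_neg hP.le, inv_inv, rpow_add hP, rpow_add hP, rpow_one, rpow_natCast]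
  have hdensity : (1 - y ^ 2) ^ (N - 1 / 2) = (1 - y ^ 2) ^ N / √(1 - y ^ 2) := by
    rw [rpow_sub hP, ← sqrt_eq_rpow]
  have hconst : N ^ ((1 : ℝ) / 2 - n) = √N / N ^ n := by
    rw [rpow_sub hN, rpow_natCast, ← sqrt_eq_rpow]
  rw [show x = relCoord N y from hx, relHermite_relCoord hN n hy, one_add_relCoord_sq_div hN hy,
    hjacobian, hweight, hdensity, hconst]
  have hw : 0 < √(1 - y ^ 2) := sqrt_pos.mpr hP
  have hsN : 0 < √N := sqrt_pos.mpr hN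
  have hsq : ((√N * √(1 - y ^ 2)) ^ n) ^ 2 = N ^ n * (1 - y ^ 2) ^ n := by
    rw [← pow_mul, mul_comm n 2, pow_mul, mul_pow, sq_sqrt hN.le, sq_sqrt hP.le, mul_pow]
  field_simp
  rw [hsq]
  ring
end

section
/- Let N be real and m, n ∈ ℕ with N − m − n > 0 and N − m + 1/2 > 0. For (X, Y) ∈ ℝ² with X² + Y² < 1, set x := X/√(1 − X² − Y²) and y := Y/√(1 − X² − Y²), and define f_{m,n,N}(x, y) := (1 + y²)^n · (1 + x² + y²)^{−N+m−1/2} · (C_n^{N−m−n}(y/√(1+y²)))² · (C_m^{N−m+1/2}(x/√(1+x²+y²)))². Then (1 − X² − Y²)^{−1} · f_{m,n,N}(x, y) = (1 − X² − Y²)^{N−n−m−1/2} · (1 − X²)^n · (C_n^{N−m−n}(Y/√(1 − X²)))² · (C_m^{N−m+1/2}(X))². (All Gegenbauer arguments lie in (−1, 1), so both sides are well defined.) -/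
/-!
Under `(X, Y) ↦ (x, y) = (X, Y) / √s` with `s = 1 - X² - Y²` one has `1 + x² + y² = s⁻¹` and
`1 + y² = (1 - X²) / s`, so the Gegenbauer arguments `x / √(1 + x² + y²)` and `y / √(1 + y²)`
become `X` and `Y / √(1 - X²)`. What remains is collecting the powers of `s`.
-/

open Real MeasureTheory Filter

section SphereToHyperbolic

variable {X Y : ℝ}

theorem one_add_sq_div_sqrt_eq (hXY : X ^ 2 + Y ^ 2 < 1) :
    1 + (Y / √(1 - X ^ 2 - Y ^ 2)) ^ 2 = (1 - X ^ 2) / (1 - X ^ 2 - Y ^ 2) := by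
  have hs : 0 < 1 - X ^ 2 - Y ^ 2 := by linarith
  rw [div_pow, sq_sqrt hs.le]
  field_simp
  ring

theorem one_add_sq_add_sq_div_sqrt_eq (hXY : X ^ 2 + Y ^ 2 < 1) :
    1 + (X / √(1 - X ^ 2 - Y ^ 2)) ^ 2 + (Y / √(1 - X ^ 2 - Y ^ 2)) ^ 2
      = (1 - X ^ 2 - Y ^ 2)⁻¹ := by
  have hs : 0 < 1 - X ^ 2 - Y ^ 2 := by linarith
  rw [div_pow, div_pow, sq_sqrt hs.le]
  field_simp
  ring

theorem div_sqrt_one_add_sq_div_sqrt_eq (hXY : X ^ 2 + Y ^ 2 < 1) :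
    Y / √(1 - X ^ 2 - Y ^ 2) / √(1 + (Y / √(1 - X ^ 2 - Y ^ 2)) ^ 2)
      = Y / √(1 - X ^ 2) := by
  have hs : 0 < √(1 - X ^ 2 - Y ^ 2) := sqrt_pos.mpr (by linarith)
  have hX : 0 < √(1 - X ^ 2) := sqrt_pos.mpr (by nlinarith)
  rw [one_add_sq_div_sqrt_eq hXY, sqrt_div (by nlinarith)]
  field_simp

theorem div_sqrt_one_add_sq_add_sq_div_sqrt_eq (hXY : X ^ 2 + Y ^ 2 < 1) :
    X / √(1 - X ^ 2 - Y ^ 2)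
        / √(1 + (X / √(1 - X ^ 2 - Y ^ 2)) ^ 2 + (Y / √(1 - X ^ 2 - Y ^ 2)) ^ 2) = X := by
  have hs : 0 < √(1 - X ^ 2 - Y ^ 2) := sqrt_pos.mpr (by linarith)
  rw [one_add_sq_add_sq_div_sqrt_eq hXY, sqrt_inv, div_inv_eq_mul, div_mul_cancel₀ _ hs.ne']

end SphereToHyperbolic

theorem rpow_neg_one_mul_div_pow_mul_inv_rpow {s : ℝ} (hs : 0 < s) (a N : ℝ) (m n : ℕ) :
    s ^ (-1 : ℝ) * ((a / s) ^ n * s⁻¹ ^ (-N + m - 1 / 2)) = s ^ (N - n - m - 1 / 2) * a ^ n := by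
  calc s ^ (-1 : ℝ) * ((a / s) ^ n * s⁻¹ ^ (-N + m - 1 / 2))
      = s ^ (-1 : ℝ) * s ^ (-(n : ℝ)) * s ^ (N - m + 1 / 2) * a ^ n := by
        rw [div_pow, div_eq_mul_inv, ← rpow_natCast s, ← rpow_neg hs.le, inv_rpow hs.le,
          ← rpow_neg hs.le, show -(-N + m - 1 / 2) = N - m + 1 / 2 by ring]
        ring
    _ = s ^ (N - n - m - 1 / 2) * a ^ n := by
        rw [← rpow_add hs, ← rpow_add hs]
        ring_nf

theorem hyperbolic_to_sphere_density_general (N : ℝ) (m n : ℕ)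
    (X Y : ℝ) (hXY : X^2 + Y^2 < 1)
    (x y : ℝ) (hx : x = X / Real.sqrt (1 - X^2 - Y^2))
    (hy : y = Y / Real.sqrt (1 - X^2 - Y^2)) :
    (1 - X^2 - Y^2)^(-(1:ℝ)) *
      ((1 + y^2)^n * (1 + x^2 + y^2)^(-N + m - 1/2) *
        (gegenbauer n (N - m - n) (y / Real.sqrt (1 + y^2)))^2 *
        (gegenbauer m (N - m + 1/2) (x / Real.sqrt (1 + x^2 + y^2)))^2)
    = (1 - X^2 - Y^2)^(N - n - m - 1/2) * (1 - X^2)^n *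
        (gegenbauer n (N - m - n) (Y / Real.sqrt (1 - X^2)))^2 *
        (gegenbauer m (N - m + 1/2) X)^2 := by
  subst hx hy
  rw [div_sqrt_one_add_sq_div_sqrt_eq hXY, div_sqrt_one_add_sq_add_sq_div_sqrt_eq hXY,
    one_add_sq_div_sqrt_eq hXY, one_add_sq_add_sq_div_sqrt_eq hXY,
    ← rpow_neg_one_mul_div_pow_mul_inv_rpow (by linarith : 0 < 1 - X ^ 2 - Y ^ 2)]
  ring

theorem hyperbolic_to_sphere_density (N : ℝ) (m n : ℕ)
    (h1 : 0 < N - m - n) (h2 : 0 < N - m + 1/2)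
    (X Y : ℝ) (hXY : X^2 + Y^2 < 1)
    (x y : ℝ) (hx : x = X / Real.sqrt (1 - X^2 - Y^2))
    (hy : y = Y / Real.sqrt (1 - X^2 - Y^2)) :
    (1 - X^2 - Y^2)^(-(1:ℝ)) *
      ((1 + y^2)^n * (1 + x^2 + y^2)^(-N + m - 1/2) *
        (gegenbauer n (N - m - n) (y / Real.sqrt (1 + y^2)))^2 *
        (gegenbauer m (N - m + 1/2) (x / Real.sqrt (1 + x^2 + y^2)))^2)
    = (1 - X^2 - Y^2)^(N - n - m - 1/2) * (1 - X^2)^n *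
        (gegenbauer n (N - m - n) (Y / Real.sqrt (1 - X^2)))^2 *
        (gegenbauer m (N - m + 1/2) X)^2 :=
  hyperbolic_to_sphere_density_general N m n X Y hXY x y hx hy
end

section
/- Let 𝒩 > 0 be real and m, n ∈ ℕ with m ≠ n, m + n < 2𝒩, m < 𝒩 + 1/2 and n < 𝒩 + 1/2. Then ∫_{−∞}^{+∞} ℋ_n^𝒩(X) · ℋ_m^𝒩(X) · (1 + X²/𝒩)^{−𝒩−1/2} dX = 0. -/
open Real MeasureTheory Filter

/-!
Differentiating `(1 + X²/𝒩)^a` `k` times gives `Q_k(X) (1 + X²/𝒩)^(a-k)` with `Q_k` a polynomial of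
degree at most `k`. Hence `ℋ_m^𝒩 = (-1)^m Q_m` is a polynomial of degree at most `m`, while `ℋ_n^𝒩`
times the weight is `(-1)^n Dⁿ (1 + X²/𝒩)^(n-𝒩-1/2)`. For `m < n`, integrating by parts `n` times
moves all derivatives onto the polynomial `ℋ_m^𝒩`, which they kill. Since the exponent `n-𝒩-1/2` is
negative, every integrand decays like `|X|^(2(n-𝒩-1/2)-1)`, so it is integrable and the boundary
terms vanish.
-/

open Polynomial Topology

section RpowDerivatives

variable {N : ℝ}

/-- The polynomial `Q_k` with `Dᵏ (1 + x²/N)^a = Q_k(x) (1 + x²/N)^(a-k)`; the recursion is the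
product rule applied to `Q_k(x) (1 + x²/N)^(a-k)`. -/
noncomputable def rpowDerivPoly (N a : ℝ) : ℕ → ℝ[X]
  | 0 => 1
  | k + 1 => derivative (rpowDerivPoly N a k) * (1 + C N⁻¹ * X ^ 2)
      + C (2 * (a - k) / N) * X * rpowDerivPoly N a k

lemma natDegree_rpowDerivPoly_le (N a : ℝ) (k : ℕ) : (rpowDerivPoly N a k).natDegree ≤ k := by
  induction k with
  | zero => simp [rpowDerivPoly]
  | succ k ih =>
    have hquad : (1 + C N⁻¹ * X ^ 2 : ℝ[X]).natDegree ≤ 2 := by compute_degree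
    have hlin : (C (2 * (a - k) / N) * X : ℝ[X]).natDegree ≤ 1 := by compute_degree
    refine (natDegree_add_le _ _).trans (max_le ?_ (natDegree_mul_le.trans (by omega)))
    rcases eq_or_ne (rpowDerivPoly N a k).natDegree 0 with h0 | h0
    · simp [derivative_of_natDegree_zero h0]
    · have hder := natDegree_derivative_lt h0
      exact natDegree_mul_le.trans (by omega)

lemma hasDerivAt_eval_mul_rpow (hN : 0 < N) (P : ℝ[X]) (b x : ℝ) :
    HasDerivAt (fun x => P.eval x * (1 + x ^ 2 / N) ^ b)
      (((derivative P).eval x * (1 + x ^ 2 / N) + 2 * b / N * x * P.eval x)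
        * (1 + x ^ 2 / N) ^ (b - 1)) x := by
  have hw : 0 < 1 + x ^ 2 / N := by positivity
  have hbase : HasDerivAt (fun x : ℝ => 1 + x ^ 2 / N) (2 * x / N) x := by
    simpa using ((hasDerivAt_pow 2 x).div_const N).const_add 1
  refine ((P.hasDerivAt x).mul (hbase.rpow_const (p := b) (Or.inl hw.ne'))).congr_deriv ?_
  rw [rpow_sub_one hw.ne']
  field_simp

lemma iteratedDeriv_one_add_sq_div_rpow (hN : 0 < N) (a : ℝ) (k : ℕ) :
    iteratedDeriv k (fun x : ℝ => (1 + x ^ 2 / N) ^ a)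
      = fun x => (rpowDerivPoly N a k).eval x * (1 + x ^ 2 / N) ^ (a - k) := by
  induction k with
  | zero => simp [rpowDerivPoly]
  | succ k ih =>
    ext x
    rw [iteratedDeriv_succ, ih, (hasDerivAt_eval_mul_rpow hN _ _ x).deriv]
    simp only [rpowDerivPoly, eval_add, eval_mul, eval_one, eval_C, eval_X, eval_pow]
    rw [show a - k - 1 = a - ((k + 1 : ℕ) : ℝ) by push_cast; ring]
    ring

end RpowDerivatives

section Decay

variable {N : ℝ}

lemma abs_eval_le_mul_one_add_abs_pow (P : ℝ[X]) (x : ℝ) :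
    |P.eval x| ≤ (∑ i ∈ Finset.range (P.natDegree + 1), |P.coeff i|) * (1 + |x|) ^ P.natDegree := by
  rw [eval_eq_sum_range, Finset.sum_mul]
  refine (Finset.abs_sum_le_sum_abs _ _).trans (Finset.sum_le_sum fun i hi => ?_)
  rw [abs_mul, abs_pow]
  gcongr
  calc |x| ^ i ≤ (1 + |x|) ^ i := by gcongr; linarith
    _ ≤ (1 + |x|) ^ P.natDegree :=
      pow_le_pow_right₀ (by linarith [abs_nonneg x]) (Nat.lt_succ_iff.mp (Finset.mem_range.mp hi))

lemma one_add_abs_sq_le (hN : 0 < N) (x : ℝ) :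
    (1 + |x|) ^ 2 ≤ 2 * max 1 N * (1 + x ^ 2 / N) := by
  have hx2 : x ^ 2 ≤ max 1 N * (x ^ 2 / N) :=
    calc x ^ 2 = N * (x ^ 2 / N) := by field_simp
      _ ≤ max 1 N * (x ^ 2 / N) := by gcongr; exact le_max_right 1 N
  nlinarith [sq_abs x, sq_nonneg (1 - |x|), le_max_left 1 N]

lemma one_add_sq_div_rpow_le (hN : 0 < N) {b : ℝ} (hb : b ≤ 0) (x : ℝ) :
    (1 + x ^ 2 / N) ^ b ≤ (2 * max 1 N) ^ (-b) * (1 + |x|) ^ (2 * b) := by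
  have hK : 0 < 2 * max 1 N := by positivity
  have hx : 0 ≤ 1 + |x| := by positivity
  have hle : (1 + |x|) ^ 2 / (2 * max 1 N) ≤ 1 + x ^ 2 / N := by
    rw [div_le_iff₀ hK, mul_comm]
    exact one_add_abs_sq_le hN x
  calc (1 + x ^ 2 / N) ^ b ≤ ((1 + |x|) ^ 2 / (2 * max 1 N)) ^ b :=
        rpow_le_rpow_of_nonpos (by positivity) hle hb
    _ = (2 * max 1 N) ^ (-b) * (1 + |x|) ^ (2 * b) := by
        rw [div_rpow (by positivity) hK.le, ← rpow_natCast, ← rpow_mul hx, rpow_neg hK.le]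
        push_cast
        ring

lemma exists_abs_eval_mul_rpow_le (hN : 0 < N) (P : ℝ[X]) {b : ℝ} (hb : b ≤ 0) :
    ∃ C, ∀ x : ℝ, |P.eval x * (1 + x ^ 2 / N) ^ b| ≤ C * (1 + |x|) ^ (P.natDegree + 2 * b) := by
  refine ⟨(∑ i ∈ Finset.range (P.natDegree + 1), |P.coeff i|) * (2 * max 1 N) ^ (-b),
    fun x => ?_⟩
  have hx : 0 < 1 + |x| := by positivity
  rw [abs_mul, abs_of_nonneg (rpow_nonneg (by positivity) b), rpow_add hx, rpow_natCast]
  calc |P.eval x| * (1 + x ^ 2 / N) ^ b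
      ≤ ((∑ i ∈ Finset.range (P.natDegree + 1), |P.coeff i|) * (1 + |x|) ^ P.natDegree)
        * ((2 * max 1 N) ^ (-b) * (1 + |x|) ^ (2 * b)) :=
        mul_le_mul (abs_eval_le_mul_one_add_abs_pow P x) (one_add_sq_div_rpow_le hN hb x)
          (by positivity) (by positivity)
    _ = (∑ i ∈ Finset.range (P.natDegree + 1), |P.coeff i|) * (2 * max 1 N) ^ (-b)
        * ((1 + |x|) ^ P.natDegree * (1 + |x|) ^ (2 * b)) := by ring

lemma integrable_eval_mul_rpow (hN : 0 < N) (P : ℝ[X]) {b : ℝ} (hb : b ≤ 0)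
    (hdeg : P.natDegree + 2 * b < -1) :
    Integrable fun x : ℝ => P.eval x * (1 + x ^ 2 / N) ^ b := by
  obtain ⟨C, hC⟩ := exists_abs_eval_mul_rpow_le hN P hb
  have hmaj : Integrable fun x : ℝ => C * (1 + ‖x‖) ^ (-(-(P.natDegree + 2 * b))) :=
    (integrable_one_add_norm (by simp only [Module.finrank_self]; push_cast; linarith)).const_mul C
  refine hmaj.mono' ?_ (Eventually.of_forall fun x => ?_)
  · exact (P.continuous.mul ((continuous_const.add ((continuous_pow 2).div_const N)).rpow_const
      fun x => Or.inl (by positivity : (0 : ℝ) < 1 + x ^ 2 / N).ne')).aestronglyMeasurable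
  · simpa only [neg_neg, Real.norm_eq_abs] using hC x

lemma tendsto_eval_mul_rpow_cocompact (hN : 0 < N) (P : ℝ[X]) {b : ℝ} (hb : b ≤ 0)
    (hdeg : P.natDegree + 2 * b < 0) :
    Tendsto (fun x : ℝ => P.eval x * (1 + x ^ 2 / N) ^ b) (cocompact ℝ) (𝓝 0) := by
  obtain ⟨C, hC⟩ := exists_abs_eval_mul_rpow_le hN P hb
  have hmaj : Tendsto (fun x : ℝ => C * (1 + |x|) ^ (P.natDegree + 2 * b)) (cocompact ℝ) (𝓝 0) := by
    have hbase : Tendsto (fun x : ℝ => 1 + |x|) (cocompact ℝ) atTop :=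
      tendsto_atTop_add_const_left _ 1 
        (tendsto_norm_cocompact_atTop.congr Real.norm_eq_abs)
    simpa using ((tendsto_rpow_neg_atTop (neg_pos.mpr hdeg)).comp hbase).const_mul C
  exact squeeze_zero_norm (fun x => (Real.norm_eq_abs _).trans_le (hC x)) hmaj

end Decay

section IntegrationByParts

variable {N a : ℝ}

lemma hasDerivAt_iteratedDeriv_one_add_sq_div_rpow (hN : 0 < N) (a : ℝ) (k : ℕ) (x : ℝ) :
    HasDerivAt (iteratedDeriv k fun t : ℝ => (1 + t ^ 2 / N) ^ a)
      (iteratedDeriv (k + 1) (fun t : ℝ => (1 + t ^ 2 / N) ^ a) x) x := by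
  have h : DifferentiableAt ℝ (iteratedDeriv k fun t : ℝ => (1 + t ^ 2 / N) ^ a) x := by
    rw [iteratedDeriv_one_add_sq_div_rpow hN]
    exact (hasDerivAt_eval_mul_rpow hN _ _ x).differentiableAt
  rw [iteratedDeriv_succ]
  exact h.hasDerivAt

lemma integrable_eval_mul_iteratedDeriv_rpow (hN : 0 < N) (P : ℝ[X]) {k : ℕ} (hak : a ≤ k)
    (hdeg : P.natDegree + 2 * a < k - 1) :
    Integrable fun x => P.eval x * iteratedDeriv k (fun t : ℝ => (1 + t ^ 2 / N) ^ a) x := by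
  have hPQ : (P * rpowDerivPoly N a k).natDegree ≤ P.natDegree + k :=
    natDegree_mul_le.trans (Nat.add_le_add_left (natDegree_rpowDerivPoly_le N a k) _)
  have hPQR : ((P * rpowDerivPoly N a k).natDegree : ℝ) ≤ P.natDegree + k := by exact_mod_cast hPQ
  simpa only [iteratedDeriv_one_add_sq_div_rpow hN, eval_mul, mul_assoc] using
    integrable_eval_mul_rpow hN (P * rpowDerivPoly N a k) (sub_nonpos.mpr hak) (by linarith)

lemma tendsto_eval_mul_iteratedDeriv_rpow_cocompact (hN : 0 < N) (P : ℝ[X]) {k : ℕ}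
    (hak : a ≤ k) (hdeg : P.natDegree + 2 * a < k) :
    Tendsto (fun x => P.eval x * iteratedDeriv k (fun t : ℝ => (1 + t ^ 2 / N) ^ a) x)
      (cocompact ℝ) (𝓝 0) := by
  have hPQ : (P * rpowDerivPoly N a k).natDegree ≤ P.natDegree + k :=
    natDegree_mul_le.trans (Nat.add_le_add_left (natDegree_rpowDerivPoly_le N a k) _)
  have hPQR : ((P * rpowDerivPoly N a k).natDegree : ℝ) ≤ P.natDegree + k := by exact_mod_cast hPQ
  simpa only [iteratedDeriv_one_add_sq_div_rpow hN, eval_mul, mul_assoc] using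
    tendsto_eval_mul_rpow_cocompact hN (P * rpowDerivPoly N a k) (sub_nonpos.mpr hak)
      (by linarith)

lemma integral_eval_mul_iteratedDeriv_succ_rpow (hN : 0 < N) (ha : a < 0) {P : ℝ[X]} {k : ℕ}
    (hP : P.natDegree ≤ k) :
    ∫ x, P.eval x * iteratedDeriv (k + 1) (fun t : ℝ => (1 + t ^ 2 / N) ^ a) x
      = -∫ x, (derivative P).eval x * iteratedDeriv k (fun t : ℝ => (1 + t ^ 2 / N) ^ a) x := by
  have hPR : (P.natDegree : ℝ) ≤ k := by exact_mod_cast hP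
  have hak : a ≤ k := by linarith [k.cast_nonneg (α := ℝ)]
  have hint' : Integrable fun x =>
      (derivative P).eval x * iteratedDeriv k (fun t : ℝ => (1 + t ^ 2 / N) ^ a) x := by
    rcases eq_or_ne P.natDegree 0 with h0 | h0
    · simp [derivative_of_natDegree_zero h0]
    · have hP' : ((derivative P).natDegree : ℝ) + 1 ≤ k := by
        exact_mod_cast (natDegree_derivative_lt h0).trans_le hP
      exact integrable_eval_mul_iteratedDeriv_rpow hN _ hak (by linarith)
  have hlim := tendsto_eval_mul_iteratedDeriv_rpow_cocompact hN P hak (by linarith)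
  rw [integral_mul_deriv_eq_deriv_mul (fun x _ => P.hasDerivAt x)
    (fun x _ => hasDerivAt_iteratedDeriv_one_add_sq_div_rpow hN a k x)
    (integrable_eval_mul_iteratedDeriv_rpow hN P (by linarith) (by push_cast; linarith)) hint'
    (hlim.mono_left atBot_le_cocompact) (hlim.mono_left atTop_le_cocompact)]
  simp

theorem integral_eval_mul_iteratedDeriv_rpow_eq_zero (hN : 0 < N) (ha : a < 0) {P : ℝ[X]}
    {k : ℕ} (hP : P.natDegree < k) :
    ∫ x, P.eval x * iteratedDeriv k (fun t : ℝ => (1 + t ^ 2 / N) ^ a) x = 0 := by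
  induction k generalizing P with
  | zero => omega
  | succ k ih =>
    rw [integral_eval_mul_iteratedDeriv_succ_rpow hN ha (Nat.lt_succ_iff.mp hP), neg_eq_zero]
    rcases eq_or_ne P.natDegree 0 with h0 | h0
    · simp [derivative_of_natDegree_zero h0]
    · exact ih ((natDegree_derivative_lt h0).trans_le (Nat.lt_succ_iff.mp hP))

end IntegrationByParts

section Carinena

variable {N : ℝ}

lemma carinenaPos_eq_eval (hN : 0 < N) (m : ℕ) (x : ℝ) :
    carinenaPos m N x = (-1) ^ m * (rpowDerivPoly N (m - N - 1 / 2) m).eval x := by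
  have hw : 0 < 1 + x ^ 2 / N := by positivity
  rw [carinenaPos, iteratedDeriv_one_add_sq_div_rpow hN, mul_assoc, mul_left_comm _ (eval _ _),
    ← rpow_add hw, show N + 1 / 2 + (m - N - 1 / 2 - m) = 0 by ring, rpow_zero, mul_one]

lemma carinenaPos_mul_rpow (hN : 0 < N) (n : ℕ) (x : ℝ) :
    carinenaPos n N x * (1 + x ^ 2 / N) ^ (-N - 1 / 2)
      = (-1) ^ n * iteratedDeriv n (fun t : ℝ => (1 + t ^ 2 / N) ^ ((n : ℝ) - N - 1 / 2)) x := by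
  have hw : 0 < 1 + x ^ 2 / N := by positivity
  rw [carinenaPos, mul_right_comm, mul_assoc ((-1 : ℝ) ^ n), ← rpow_add hw,
    show N + 1 / 2 + (-N - 1 / 2) = 0 by ring, rpow_zero, mul_one]

lemma integral_carinenaPos_mul_carinenaPos_of_lt (hN : 0 < N) {m n : ℕ} (hmn : m < n)
    (hn : (n : ℝ) < N + 1 / 2) :
    ∫ x : ℝ, carinenaPos n N x * carinenaPos m N x * (1 + x ^ 2 / N) ^ (-N - 1 / 2) = 0 := by
  set P : ℝ[X] := C ((-1) ^ m) * rpowDerivPoly N (m - N - 1 / 2) m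
  have hP : P.natDegree < n :=
    (natDegree_C_mul_le _ _).trans_lt ((natDegree_rpowDerivPoly_le _ _ m).trans_lt hmn)
  have hintegrand : ∀ x, carinenaPos n N x * carinenaPos m N x * (1 + x ^ 2 / N) ^ (-N - 1 / 2)
      = (-1) ^ n * (P.eval x
        * iteratedDeriv n (fun t : ℝ => (1 + t ^ 2 / N) ^ ((n : ℝ) - N - 1 / 2)) x) := by
    intro x
    rw [mul_right_comm, carinenaPos_mul_rpow hN, carinenaPos_eq_eval hN]
    simp only [P, eval_mul, eval_C]
    ring
  simp_rw [hintegrand]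
  rw [integral_const_mul, integral_eval_mul_iteratedDeriv_rpow_eq_zero hN (by linarith) hP,
    mul_zero]

end Carinena

theorem carinena_pos_orthogonality_general (𝒩 : ℝ) (h𝒩 : 0 < 𝒩) (m n : ℕ) (hmn : m ≠ n)
    (hm : (m : ℝ) < 𝒩 + 1/2) (hn : (n : ℝ) < 𝒩 + 1/2) :
    ∫ X : ℝ, carinenaPos n 𝒩 X * carinenaPos m 𝒩 X * (1 + X^2/𝒩)^(-𝒩 - 1/2) = 0 := by
  rcases hmn.lt_or_gt with hlt | hgt
  · exact integral_carinenaPos_mul_carinenaPos_of_lt h𝒩 hlt hn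
  · simp_rw [mul_comm (carinenaPos n 𝒩 _)]
    exact integral_carinenaPos_mul_carinenaPos_of_lt h𝒩 hgt hm

theorem carinena_pos_orthogonality (𝒩 : ℝ) (h𝒩 : 0 < 𝒩) (m n : ℕ) (hmn : m ≠ n)
    (hint : (m : ℝ) + n < 2 * 𝒩)
    (hm : (m : ℝ) < 𝒩 + 1/2) (hn : (n : ℝ) < 𝒩 + 1/2) :
    ∫ X : ℝ, carinenaPos n 𝒩 X * carinenaPos m 𝒩 X * (1 + X^2/𝒩)^(-𝒩 - 1/2) = 0 :=
  carinena_pos_orthogonality_general 𝒩 h𝒩 m n hmn hm hn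
end

section
/- Let ν > 0 be real and m, n ∈ ℕ with m ≠ n. Then ∫_{−√ν}^{+√ν} 𝒞_n^ν(X) · 𝒞_m^ν(X) · (1 − X²/ν)^{ν−1/2} dX = 0. -/
/-! Write `w = 1 - X² / ν` and `a = √ν`. On `(-a, a)` the `i`-th derivative of `w ^ E` is
a polynomial of degree `≤ i` times `w ^ (E - i)`; hence `𝒞_m^ν` is a polynomial of degree `≤ m`,
and `𝒞_n^ν · w ^ (ν - 1/2) = (-1)ⁿ (w ^ (n + ν - 1/2))⁽ⁿ⁾`. For `m < n`, integrating by parts `n`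
times moves every derivative onto `𝒞_m^ν`, which they annihilate. The boundary terms vanish
because the exponent `n + ν - 1/2 - i` is positive for `i < n`, and all integrands stay
integrable because it exceeds `-1` for `i ≤ n`. -/

open Real MeasureTheory Filter

open Polynomial Set Topology

section OneSubSqDiv

variable {ν : ℝ}

lemma pos_of_mem_Ioo_neg_sqrt_sqrt {x : ℝ} (hx : x ∈ Ioo (-√ν) √ν) : 0 < ν :=
  Real.sqrt_pos.1 (by linarith [hx.1, hx.2])

lemma one_sub_sq_div_pos {x : ℝ} (hx : x ∈ Ioo (-√ν) √ν) : 0 < 1 - x ^ 2 / ν := by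
  have hν := pos_of_mem_Ioo_neg_sqrt_sqrt hx
  rw [sub_pos, div_lt_one hν]
  simpa [Real.sq_sqrt hν.le] using sq_lt_sq' hx.1 hx.2

/-- `d/dx (Q x · w x ^ c) = (rodriguesStep ν c Q) x · w x ^ (c - 1)` for `w x = 1 - x² / ν`. -/
noncomputable def rodriguesStep (ν c : ℝ) (Q : ℝ[X]) : ℝ[X] :=
  derivative Q * (1 - C ν⁻¹ * X ^ 2) - C (2 * c / ν) * X * Q

lemma natDegree_rodriguesStep_le (ν c : ℝ) (Q : ℝ[X]) :
    (rodriguesStep ν c Q).natDegree ≤ Q.natDegree + 1 := by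
  have hw : (1 - C ν⁻¹ * X ^ 2 : ℝ[X]).natDegree ≤ 2 := by compute_degree
  have hlin : (C (2 * c / ν) * X : ℝ[X]).natDegree ≤ 1 := by compute_degree
  refine (natDegree_sub_le _ _).trans (max_le ?_ ?_)
  · by_cases hQ : Q.natDegree = 0
    · simp [derivative_of_natDegree_zero hQ]
    · have := natDegree_derivative_lt hQ
      exact natDegree_mul_le.trans (by omega)
  · exact natDegree_mul_le.trans (by omega)

lemma hasDerivAt_of_eqOn_eval_mul_rpow {F : ℝ → ℝ} {Q : ℝ[X]} {c x : ℝ}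
    (hF : EqOn F (fun x => Q.eval x * (1 - x ^ 2 / ν) ^ c) (Ioo (-√ν) √ν))
    (hx : x ∈ Ioo (-√ν) √ν) :
    HasDerivAt F ((rodriguesStep ν c Q).eval x * (1 - x ^ 2 / ν) ^ (c - 1)) x := by
  have hw := one_sub_sq_div_pos hx
  have hν := (pos_of_mem_Ioo_neg_sqrt_sqrt hx).ne'
  have hweight : HasDerivAt (fun x => 1 - x ^ 2 / ν) (-(2 * x / ν)) x := by
    simpa using ((hasDerivAt_pow 2 x).div_const ν).const_sub 1
  have hG := (Q.hasDerivAt x).mul (hweight.rpow_const (p := c) (Or.inl hw.ne'))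
  refine (hG.congr_of_eventuallyEq (eventuallyEq_of_mem (isOpen_Ioo.mem_nhds hx) hF))
    |>.congr_deriv ?_
  have hsplit : (1 - x ^ 2 / ν) ^ c = (1 - x ^ 2 / ν) ^ (c - 1) * (1 - x ^ 2 / ν) := by
    rw [← Real.rpow_add_one hw.ne', sub_add_cancel]
  simp only [rodriguesStep, hsplit, eval_sub, eval_mul, eval_one, eval_C, eval_X, eval_pow]
  field_simp
  ring

lemma exists_eqOn_iteratedDeriv_one_sub_sq_div_rpow (ν E : ℝ) (j : ℕ) :
    ∃ Q : ℝ[X], Q.natDegree ≤ j ∧ EqOn (iteratedDeriv j fun x => (1 - x ^ 2 / ν) ^ E)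
      (fun x => Q.eval x * (1 - x ^ 2 / ν) ^ (E - j)) (Ioo (-√ν) √ν) := by
  induction j with
  | zero => exact ⟨1, by simp, fun x _ => by simp⟩
  | succ j ih =>
    obtain ⟨Q, hQdeg, hQ⟩ := ih
    refine ⟨rodriguesStep ν (E - j) Q, (natDegree_rodriguesStep_le _ _ Q).trans (by omega),
      fun x hx => ?_⟩
    rw [iteratedDeriv_succ, (hasDerivAt_of_eqOn_eval_mul_rpow hQ hx).deriv]
    push_cast
    ring_nf

lemma hasDerivAt_iteratedDeriv_one_sub_sq_div_rpow (E : ℝ) (j : ℕ) {x : ℝ}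
    (hx : x ∈ Ioo (-√ν) √ν) :
    HasDerivAt (iteratedDeriv j fun x => (1 - x ^ 2 / ν) ^ E)
      (iteratedDeriv (j + 1) (fun x => (1 - x ^ 2 / ν) ^ E) x) x := by
  obtain ⟨Q, -, hQ⟩ := exists_eqOn_iteratedDeriv_one_sub_sq_div_rpow ν E j
  rw [iteratedDeriv_succ]
  exact (hasDerivAt_of_eqOn_eval_mul_rpow hQ hx).differentiableAt.hasDerivAt

/-- Near `√ν` the weight is `(√ν - x) · (√ν + x) / ν` with the second factor continuous and
positive, so it is integrable like `(√ν - x) ^ e`; the left half follows by symmetry. -/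
lemma intervalIntegrable_one_sub_sq_div_rpow (hν : 0 < ν) {e : ℝ} (he : -1 < e) :
    IntervalIntegrable (fun x => (1 - x ^ 2 / ν) ^ e) volume (-√ν) √ν := by
  set a := √ν
  have ha : 0 < a := Real.sqrt_pos.2 hν
  have hsing : IntervalIntegrable (fun x => (a - x) ^ e) volume 0 a := by
    simpa using ((intervalIntegral.intervalIntegrable_rpow' (a := 0) (b := a) he).comp_sub_left
      a).symm
  have hreg : ContinuousOn (fun x => ((a + x) / ν) ^ e) (uIcc 0 a) := by
    refine ContinuousOn.rpow_const (by fun_prop) fun x hx => Or.inl ?_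
    rw [uIcc_of_le ha.le] at hx
    exact (div_pos (by linarith [hx.1]) hν).ne'
  have hright : IntervalIntegrable (fun x => (1 - x ^ 2 / ν) ^ e) volume 0 a := by
    refine (hsing.mul_continuousOn hreg).congr_uIoo fun x hx => ?_
    rw [uIoo_of_le ha.le] at hx
    have hfactor : 1 - x ^ 2 / ν = (a - x) * ((a + x) / ν) := by
      rw [← Real.sq_sqrt hν.le]; field_simp; ring
    simp only [hfactor]
    rw [Real.mul_rpow (by linarith [hx.2]) (div_pos (by linarith [hx.1]) hν).le]
  have hleft : IntervalIntegrable (fun x => (1 - x ^ 2 / ν) ^ e) volume (-a) 0 := by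
    simpa using ((IntervalIntegrable.iff_comp_neg (by simp)).mp hright).symm
  exact hleft.trans hright

lemma intervalIntegrable_iteratedDeriv_mul_eval (hν : 0 < ν) {E : ℝ} {j : ℕ}
    (hE : (j : ℝ) - 1 < E) (P : ℝ[X]) :
    IntervalIntegrable (fun x => iteratedDeriv j (fun x => (1 - x ^ 2 / ν) ^ E) x * P.eval x)
      volume (-√ν) √ν := by
  obtain ⟨Q, -, hQ⟩ := exists_eqOn_iteratedDeriv_one_sub_sq_div_rpow ν E j
  have hint := (intervalIntegrable_one_sub_sq_div_rpow hν (e := E - j) (by linarith))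
    |>.continuousOn_mul (g := fun x => Q.eval x * P.eval x) (by fun_prop)
  refine hint.congr_uIoo fun x hx => ?_
  rw [uIoo_of_le (by linarith [Real.sqrt_nonneg ν])] at hx
  simp only [hQ hx]
  ring

lemma tendsto_iteratedDeriv_mul_eval (hν : ν ≠ 0) {E : ℝ} {j : ℕ} (hE : (j : ℝ) < E) (P : ℝ[X])
    {x₀ : ℝ} (hx₀ : x₀ ^ 2 = ν) :
    Tendsto (fun x => iteratedDeriv j (fun x => (1 - x ^ 2 / ν) ^ E) x * P.eval x)
      (𝓝[Ioo (-√ν) √ν] x₀) (𝓝 0) := by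
  obtain ⟨Q, -, hQ⟩ := exists_eqOn_iteratedDeriv_one_sub_sq_div_rpow ν E j
  have hcont : ContinuousAt (fun x => Q.eval x * (1 - x ^ 2 / ν) ^ (E - j) * P.eval x) x₀ :=
    ((Q.continuousAt).mul ((ContinuousAt.rpow_const (by fun_prop)
      (Or.inr (sub_pos.2 hE).le)))).mul P.continuousAt
  have hzero : Q.eval x₀ * (1 - x₀ ^ 2 / ν) ^ (E - j) * P.eval x₀ = 0 := by
    simp [hx₀, div_self hν, Real.zero_rpow (sub_pos.2 hE).ne']
  refine (hzero ▸ hcont.tendsto.mono_left nhdsWithin_le_nhds).congr' ?_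
  filter_upwards [self_mem_nhdsWithin] with x hx
  rw [hQ hx]

theorem integral_iteratedDeriv_mul_eval_eq_zero (hν : 0 < ν) {E : ℝ} {j : ℕ}
    (hE : (j : ℝ) - 1 < E) {P : ℝ[X]} (hP : P.natDegree < j) :
    ∫ x in -√ν..√ν, iteratedDeriv j (fun x => (1 - x ^ 2 / ν) ^ E) x * P.eval x = 0 := by
  induction j generalizing P with
  | zero => omega
  | succ j ih =>
    have hE' : (j : ℝ) < E := by push_cast at hE; linarith
    have hlt : -√ν < √ν := by linarith [Real.sqrt_pos.2 hν]
    have hsq : (√ν) ^ 2 = ν := Real.sq_sqrt hν.le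
    have hint₁ := intervalIntegrable_iteratedDeriv_mul_eval hν hE P
    have hint₂ := intervalIntegrable_iteratedDeriv_mul_eval hν (E := E) (j := j) (by linarith)
      (derivative P)
    have hFTC := intervalIntegral.integral_eq_sub_of_hasDerivAt_of_tendsto hlt
      (fun x hx => (hasDerivAt_iteratedDeriv_one_sub_sq_div_rpow E j hx).mul (P.hasDerivAt x))
      (hint₁.add hint₂)
      (nhdsWithin_Ioo_eq_nhdsGT hlt ▸
        tendsto_iteratedDeriv_mul_eval hν.ne' hE' P (by simpa using hsq))
      (nhdsWithin_Ioo_eq_nhdsLT hlt ▸ tendsto_iteratedDeriv_mul_eval hν.ne' hE' P hsq)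
    have hlower : ∫ x in -√ν..√ν,
        iteratedDeriv j (fun x => (1 - x ^ 2 / ν) ^ E) x * (derivative P).eval x = 0 := by
      by_cases hP0 : P.natDegree = 0
      · simp [derivative_of_natDegree_zero hP0]
      · exact ih (by linarith) ((natDegree_derivative_lt hP0).trans_le (by omega))
    rw [intervalIntegral.integral_add hint₁ hint₂, hlower] at hFTC
    simpa using hFTC

end OneSubSqDiv

lemma carinenaNeg_mul_rpow {ν x : ℝ} (n : ℕ) (hx : 0 < 1 - x ^ 2 / ν) :
    carinenaNeg n ν x * (1 - x ^ 2 / ν) ^ (ν - 1 / 2) =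
      (-1) ^ n * iteratedDeriv n (fun t => (1 - t ^ 2 / ν) ^ ((n : ℝ) + ν - 1 / 2)) x := by
  have hcancel : (1 - x ^ 2 / ν) ^ ((1 : ℝ) / 2 - ν) * (1 - x ^ 2 / ν) ^ (ν - 1 / 2) = 1 := by
    rw [← Real.rpow_add hx]; norm_num
  rw [carinenaNeg, mul_right_comm, mul_assoc _ _ ((1 - x ^ 2 / ν) ^ (ν - 1 / 2)), hcancel]
  ring

lemma exists_eqOn_carinenaNeg (ν : ℝ) (m : ℕ) :
    ∃ P : ℝ[X], P.natDegree ≤ m ∧ EqOn (carinenaNeg m ν) P.eval (Ioo (-√ν) √ν) := by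
  obtain ⟨Q, hQdeg, hQ⟩ := exists_eqOn_iteratedDeriv_one_sub_sq_div_rpow ν ((m : ℝ) + ν - 1 / 2) m
  refine ⟨C ((-1) ^ m) * Q, natDegree_C_mul_le _ _ |>.trans hQdeg, fun x hx => ?_⟩
  have hcancel : (1 - x ^ 2 / ν) ^ ((1 : ℝ) / 2 - ν) * (1 - x ^ 2 / ν) ^ ((m : ℝ) + ν - 1 / 2 - m)
      = 1 := by
    rw [← Real.rpow_add (one_sub_sq_div_pos hx)]
    convert Real.rpow_zero (1 - x ^ 2 / ν) using 2
    ring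
  simp only [carinenaNeg, hQ hx, eval_mul, eval_C]
  linear_combination (-1) ^ m * Q.eval x * hcancel

theorem carinena_neg_orthogonality (ν : ℝ) (hν : 0 < ν) (m n : ℕ) (hmn : m ≠ n) :
    ∫ X in Set.Ioo (-Real.sqrt ν) (Real.sqrt ν),
        carinenaNeg n ν X * carinenaNeg m ν X * (1 - X^2/ν)^(ν - 1/2) = 0 := by
  wlog hlt : m < n generalizing m n
  · rw [← this n m hmn.symm (by omega)]
    simp only [mul_comm (carinenaNeg n ν _)]
  obtain ⟨P, hPdeg, hP⟩ := exists_eqOn_carinenaNeg ν m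
  have hintegrand : EqOn
      (fun x => carinenaNeg n ν x * carinenaNeg m ν x * (1 - x ^ 2 / ν) ^ (ν - 1 / 2))
      (fun x => iteratedDeriv n (fun t => (1 - t ^ 2 / ν) ^ ((n : ℝ) + ν - 1 / 2)) x *
        (C ((-1) ^ n) * P).eval x) (Ioo (-√ν) √ν) := fun x hx => by
    simp only [mul_right_comm (carinenaNeg n ν x), carinenaNeg_mul_rpow n (one_sub_sq_div_pos hx),
      hP hx, eval_mul, eval_C]
    ring
  rw [setIntegral_congr_fun measurableSet_Ioo hintegrand,
    ← integral_Ioc_eq_integral_Ioo,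
    ← intervalIntegral.integral_of_le (by linarith [Real.sqrt_nonneg ν])]
  exact integral_iteratedDeriv_mul_eval_eq_zero hν (by linarith)
    ((natDegree_C_mul_le _ _).trans_lt (by omega))
end

section
/- Fix n ∈ ℕ and X ∈ ℝ. Then the relativistic Hermite polynomial converges to the classical Hermite polynomial as the parameter tends to infinity: lim_{N→+∞} H_n^N(X) = H_n(X), where the limit is taken over real N → +∞. -/
open Real MeasureTheory Filter

/-- Classical (physicists') Hermite polynomial via its Rodrigues formula. -/
noncomputable def hermiteClassical (n : ℕ) (X : ℝ) : ℝ :=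
  (-1 : ℝ)^n * Real.exp (X^2) * iteratedDeriv n (fun t : ℝ => Real.exp (-t^2)) X

/-!
With `ε = 1/N`, both `(1 + x²/N)^(-N)` and `exp (-x²)` solve `f' = -2x f / (1 + ε x²)`
(the latter with `ε = 0`). Every solution of this equation has
`f⁽ⁿ⁾ = Qₙ(ε, x) f / (1 + ε x²)ⁿ` for a two-variable polynomial `Qₙ` independent of `f`.
The Rodrigues formulas therefore reduce to `H_n^N(X) = (-1)ⁿ Qₙ(1/N, X)` and
`H_n(X) = (-1)ⁿ Qₙ(0, X)`, and the limit is continuity of `Qₙ` in its first variable.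
-/

section RodriguesPoly

open Polynomial

/-- The outer variable is `x`, the coefficients are polynomials in `ε`. -/
noncomputable def rodriguesPoly : ℕ → ℝ[X][X]
  | 0 => 1
  | k + 1 => derivative (rodriguesPoly k) * (1 + C X * X ^ 2)
      - C (2 + C (2 * (k : ℝ)) * X) * X * rodriguesPoly k

lemma evalEval_rodriguesPoly_succ (k : ℕ) (ε x : ℝ) :
    (rodriguesPoly (k + 1)).evalEval ε x =
      (derivative ((rodriguesPoly k).map (evalRingHom ε))).eval x * (1 + ε * x ^ 2)
        - (2 + 2 * k * ε) * x * (rodriguesPoly k).evalEval ε x := by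
  simp [← map_evalRingHom_eval, rodriguesPoly, derivative_map]

lemma continuous_evalEval_rodriguesPoly (n : ℕ) (x : ℝ) :
    Continuous fun ε : ℝ => (rodriguesPoly n).evalEval ε x :=
  (eval (C x) (rodriguesPoly n)).continuous

theorem iteratedDeriv_eq_evalEval_rodriguesPoly {ε : ℝ} (hε : 0 ≤ ε) {f : ℝ → ℝ}
    (hf : ∀ x, HasDerivAt f (-(2 * x) / (1 + ε * x ^ 2) * f x) x) (n : ℕ) (x : ℝ) :
    iteratedDeriv n f x = (rodriguesPoly n).evalEval ε x * f x / (1 + ε * x ^ 2) ^ n := by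
  induction n generalizing x with
  | zero => simp [rodriguesPoly]
  | succ k ih =>
    set q := (rodriguesPoly k).map (evalRingHom ε)
    have hu : 1 + ε * x ^ 2 ≠ 0 := by positivity
    have hpow : HasDerivAt (fun x => (1 + ε * x ^ 2) ^ k)
        (k * (1 + ε * x ^ 2) ^ k / (1 + ε * x ^ 2) * (2 * ε * x)) x := by
      refine ((((hasDerivAt_pow 2 x).const_mul ε).const_add 1).pow k).congr_deriv ?_
      rcases k with _ | k
      · simp
      · field_simp
        push_cast
        ring
    have hq := ((q.hasDerivAt x).fun_mul (hf x)).fun_div hpow (pow_ne_zero k hu)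
    have hk : iteratedDeriv k f = fun x => q.eval x * f x / (1 + ε * x ^ 2) ^ k := by
      ext x
      rw [ih, map_evalRingHom_eval]
    rw [iteratedDeriv_succ, hk, hq.deriv, evalEval_rodriguesPoly_succ, ← map_evalRingHom_eval]
    field_simp
    ring

end RodriguesPoly

lemma hasDerivAt_exp_neg_sq (x : ℝ) :
    HasDerivAt (fun t => exp (-t ^ 2)) (-(2 * x) / (1 + 0 * x ^ 2) * exp (-x ^ 2)) x :=
  ((hasDerivAt_pow 2 x).fun_neg.exp).congr_deriv (by simp only [zero_mul, add_zero, div_one]; ring)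

lemma hasDerivAt_one_add_sq_div_rpow_neg {N : ℝ} (hN : 0 < N) (x : ℝ) :
    HasDerivAt (fun t => (1 + t ^ 2 / N) ^ (-N))
      (-(2 * x) / (1 + N⁻¹ * x ^ 2) * (1 + x ^ 2 / N) ^ (-N)) x := by
  have hu : 0 < 1 + x ^ 2 / N := by positivity
  refine ((((hasDerivAt_pow 2 x).div_const N).const_add 1).rpow_const
    (p := -N) (Or.inl hu.ne')).congr_deriv ?_
  rw [rpow_sub hu, rpow_one]
  field_simp
  ring

lemma hermiteClassical_eq_evalEval_rodriguesPoly (n : ℕ) (X : ℝ) :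
    hermiteClassical n X = (-1) ^ n * (rodriguesPoly n).evalEval 0 X := by
  have h : exp (X ^ 2) * exp (-X ^ 2) = 1 := by rw [← exp_add, add_neg_cancel, exp_zero]
  rw [hermiteClassical, iteratedDeriv_eq_evalEval_rodriguesPoly le_rfl hasDerivAt_exp_neg_sq]
  linear_combination (-1) ^ n * (rodriguesPoly n).evalEval 0 X * h

lemma relHermite_eq_evalEval_rodriguesPoly (n : ℕ) (X : ℝ) {N : ℝ} (hN : 0 < N) :
    relHermite n N X = (-1) ^ n * (rodriguesPoly n).evalEval N⁻¹ X := by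
  have hu : 0 < 1 + X ^ 2 / N := by positivity
  rw [relHermite, iteratedDeriv_eq_evalEval_rodriguesPoly (inv_nonneg.2 hN.le)
    (hasDerivAt_one_add_sq_div_rpow_neg hN), ← div_eq_inv_mul, rpow_add hu, rpow_neg hu.le,
    rpow_natCast]
  field_simp

theorem relHermite_tendsto_hermite (n : ℕ) (X : ℝ) :
    Filter.Tendsto (fun N : ℝ => relHermite n N X) Filter.atTop
      (nhds (hermiteClassical n X)) := by
  rw [hermiteClassical_eq_evalEval_rodriguesPoly]
  refine ((((continuous_evalEval_rodriguesPoly n X).tendsto 0).comp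
    tendsto_inv_atTop_zero).const_mul _).congr' ?_
  filter_upwards [eventually_gt_atTop 0] with N hN
  exact (relHermite_eq_evalEval_rodriguesPoly n X hN).symm
end
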